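/- For every n ≥ 3 such that n is not a power of 2, the order superpower graph S(D_{2n}) of the dihedral group D_{2n} of order 2n is not minimally edge connected. -/

import Mathlib

/-- The degree of a vertex: the number of its neighbours. -/
noncomputable def gDeg {V : Type*} (G : SimpleGraph V) (v : V) : ℕ :=
  (G.neighborSet v).ncard

/-- The minimum degree of a graph. -/
noncomputable def minDeg {V : Type*} (G : SimpleGraph V) : ℕ :=
  sInf (Set.range (gDeg G))

/-- The edge connectivity: the minimum size of a set of edges whose removal
disconnects the graph. -/
noncomputable def edgeConn {V : Type*} (G : SimpleGraph V) : ℕ :=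
  sInf {n : ℕ | ∃ S : Set (Sym2 V), S ⊆ G.edgeSet ∧ S.ncard = n ∧
    ¬ (G.deleteEdges S).Connected}

/-- The vertex connectivity: the minimum size of a set of vertices whose removal
disconnects the graph or leaves a single vertex. -/
noncomputable def vertexConn {V : Type*} (G : SimpleGraph V) : ℕ :=
  sInf {n : ℕ | ∃ S : Set V, S.ncard = n ∧ Sᶜ.Nonempty ∧
    (¬ (G.induce Sᶜ).Preconnected ∨ Sᶜ.ncard = 1)}

/-- A graph is minimally edge connected if deleting any edge decreases the
edge connectivity by one. -/
def MinEdgeConnected {V : Type*} (G : SimpleGraph V) : Prop :=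
  ∀ e ∈ G.edgeSet, edgeConn (G.deleteEdges {e}) = edgeConn G - 1

/-- A graph is minimally connected if deleting any edge decreases the
vertex connectivity by one. -/
def MinConnected {V : Type*} (G : SimpleGraph V) : Prop :=
  ∀ e ∈ G.edgeSet, vertexConn (G.deleteEdges {e}) = vertexConn G - 1

/-- The power graph of a group: distinct `x, y` are adjacent iff one is a
natural power of the other. -/
def powerGraph (G : Type*) [Group G] : SimpleGraph G :=
  SimpleGraph.fromRel (fun x y => ∃ m : ℕ, y = x ^ m)

/-- The enhanced power graph of a group: distinct `x, y` are adjacent iff they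
lie in a common cyclic subgroup. -/
def enhancedPowerGraph (G : Type*) [Group G] : SimpleGraph G :=
  SimpleGraph.fromRel
    (fun x y => ∃ z : G, x ∈ Subgroup.zpowers z ∧ y ∈ Subgroup.zpowers z)

/-- The order superpower graph of a group: distinct `x, y` are adjacent iff the
order of one divides the order of the other. -/
def superpowerGraph (G : Type*) [Group G] : SimpleGraph G :=
  SimpleGraph.fromRel (fun x y => orderOf x ∣ orderOf y)

/-! In the order superpower graph the identity is adjacent to every other vertex, and a graph with
a universal vertex has edge connectivity equal to its minimum degree `δ`. If `n` has an odd prime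
factor `p`, an element of order `p` is a rotation adjacent to no reflection, so `δ ≤ n - 1`; each
reflection is adjacent to the identity and to the other `n - 1` reflections, so has degree `≥ n`.
Deleting an edge between two reflections therefore changes neither `δ` nor the edge connectivity,
which is positive. -/

open Set

namespace SimpleGraph

variable {V : Type*} (G : SimpleGraph V)

lemma gDeg_mono {G' : SimpleGraph V} [Finite V] (h : G' ≤ G) (v : V) : gDeg G' v ≤ gDeg G v :=
  ncard_le_ncard (neighborSet_mono h v)

lemma minDeg_le_gDeg (v : V) : minDeg G ≤ gDeg G v :=
  Nat.sInf_le ⟨v, rfl⟩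

lemma exists_gDeg_eq_minDeg [Nonempty V] : ∃ v, gDeg G v = minDeg G :=
  Nat.sInf_mem (range_nonempty _)

lemma minDeg_mono {G' : SimpleGraph V} [Finite V] [Nonempty V] (h : G' ≤ G) :
    minDeg G' ≤ minDeg G := by
  obtain ⟨v, hv⟩ := G.exists_gDeg_eq_minDeg
  exact hv ▸ (G'.minDeg_le_gDeg v).trans (G.gDeg_mono h v)

lemma ncard_incidenceSet (v : V) : (G.incidenceSet v).ncard = gDeg G v := by
  classical
  exact Nat.card_congr (G.incidenceSetEquivNeighborSet v)

lemma incidenceSet_deleteEdges (s : Set (Sym2 V)) (v : V) :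
    (G.deleteEdges s).incidenceSet v = G.incidenceSet v \ s := by
  ext e
  simp only [incidenceSet, edgeSet_deleteEdges, mem_ofPred_eq, mem_sdiff]
  tauto

lemma gDeg_deleteEdges_singleton_of_notMem {e : Sym2 V} {v : V} (hv : v ∉ e) :
    gDeg (G.deleteEdges {e}) v = gDeg G v := by
  rw [← ncard_incidenceSet, ← ncard_incidenceSet, incidenceSet_deleteEdges,
    sdiff_singleton_eq_self fun he => hv he.2]

lemma gDeg_le_gDeg_deleteEdges_singleton_add_one [Finite V] (e : Sym2 V) (v : V) :
    gDeg G v ≤ gDeg (G.deleteEdges {e}) v + 1 := by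
  rw [← ncard_incidenceSet, ← ncard_incidenceSet, incidenceSet_deleteEdges, ← ncard_singleton e]
  exact ncard_le_ncard_sdiff_add_ncard _ _

lemma minDeg_deleteEdges_singleton [Finite V] [Nonempty V] {e : Sym2 V}
    (he : ∀ v ∈ e, minDeg G < gDeg G v) : minDeg (G.deleteEdges {e}) = minDeg G := by
  refine le_antisymm (G.minDeg_mono (G.deleteEdges_le _)) ?_
  obtain ⟨v, hv⟩ := (G.deleteEdges {e}).exists_gDeg_eq_minDeg
  rw [← hv]
  by_cases hve : v ∈ e
  · exact Nat.le_of_lt_succ ((he v hve).trans_le (G.gDeg_le_gDeg_deleteEdges_singleton_add_one e v))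
  · exact (G.gDeg_deleteEdges_singleton_of_notMem hve).symm ▸ G.minDeg_le_gDeg v

lemma not_connected_deleteEdges_incidenceSet [Nontrivial V] (v : V) :
    ¬ (G.deleteEdges (G.incidenceSet v)).Connected := by
  intro hcon
  obtain ⟨w, hw⟩ := exists_ne v
  obtain ⟨p⟩ := hcon.preconnected v w
  cases p with
  | nil => exact hw rfl
  | cons h _ =>
    obtain ⟨hadj, hnot⟩ := deleteEdges_adj.mp h
    exact hnot ((G.mem_incidenceSet v _).mpr hadj)

variable {G}

/-- A vertex `v` cut off from a universal vertex `u` sends each of its edges to a distinct edge of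
the cut: an edge `vw` itself when `w` is still reachable from `u`, and the edge `uw` otherwise. -/
lemma gDeg_le_ncard_of_not_reachable [Finite V] {u v : V} (hu : ∀ w, w ≠ u → G.Adj u w)
    {S : Set (Sym2 V)} (huv : ¬ (G.deleteEdges S).Reachable u v) : gDeg G v ≤ S.ncard := by
  classical
  set A := {w | (G.deleteEdges S).Reachable u w}
  have hvA : v ∉ A := huv
  have huA : u ∈ A := Reachable.refl u
  have cut : ∀ w ∈ A, ∀ w' ∉ A, G.Adj w w' → s(w, w') ∈ S := fun w hw w' hw' hadj => by
    by_contra hS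
    exact hw' (hw.trans (deleteEdges_adj.mpr ⟨hadj, hS⟩).reachable)
  let f : V → Sym2 V := fun w => if w ∈ A then s(v, w) else s(u, w)
  refine ncard_le_ncard_of_injOn f (fun w hw => ?_) (fun w hw w' hw' hf => ?_) (toFinite S)
  · have hvw : G.Adj v w := hw
    by_cases hwA : w ∈ A
    · simpa [f, hwA, Sym2.eq_swap] using cut w hwA v hvA hvw.symm
    · simpa [f, hwA] using cut u huA w hwA (hu w fun h => hwA (h ▸ huA))
  · have hwv : w ≠ v := (G.ne_of_adj hw).symm
    have hw'v : w' ≠ v := (G.ne_of_adj hw').symm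
    have hvu : v ≠ u := fun h => hvA (h ▸ huA)
    by_cases hwA : w ∈ A <;> by_cases hwA' : w' ∈ A <;>
      simp only [f, hwA, hwA', if_true, if_false, Sym2.eq_iff] at hf
    all_goals grind

lemma minDeg_le_ncard_of_not_connected [Finite V] {u : V} (hu : ∀ w, w ≠ u → G.Adj u w)
    {S : Set (Sym2 V)} (hS : ¬ (G.deleteEdges S).Connected) : minDeg G ≤ S.ncard := by
  obtain ⟨v, hv⟩ : ∃ v, ¬ (G.deleteEdges S).Reachable u v := by
    by_contra! h
    exact hS (connected_iff_exists_forall_reachable _ |>.mpr ⟨u, h⟩)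
  exact (G.minDeg_le_gDeg v).trans (gDeg_le_ncard_of_not_reachable hu hv)

lemma edgeConn_eq_minDeg [Finite V] [Nontrivial V] {u : V} (hu : ∀ w, w ≠ u → G.Adj u w) :
    edgeConn G = minDeg G := by
  obtain ⟨v, hv⟩ := G.exists_gDeg_eq_minDeg
  have hcut := G.not_connected_deleteEdges_incidenceSet v
  refine le_antisymm
    (Nat.sInf_le ⟨_, G.incidenceSet_subset v, by rw [ncard_incidenceSet, hv], hcut⟩)
    (le_csInf ⟨_, _, G.incidenceSet_subset v, rfl, hcut⟩ ?_)
  rintro _ ⟨S, -, rfl, hS⟩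
  exact minDeg_le_ncard_of_not_connected hu hS

lemma minDeg_pos [Finite V] [Nontrivial V] {u : V} (hu : ∀ w, w ≠ u → G.Adj u w) :
    0 < minDeg G := by
  obtain ⟨v, hv⟩ := G.exists_gDeg_eq_minDeg
  obtain ⟨w, hvw⟩ : ∃ w, G.Adj v w := by
    by_cases hvu : v = u
    · obtain ⟨w, hw⟩ := exists_ne u
      exact ⟨w, hvu ▸ hu w hw⟩
    · exact ⟨u, (hu v hvu).symm⟩
  exact hv ▸ (ncard_pos (toFinite _)).mpr ⟨w, hvw⟩

theorem not_minEdgeConnected_of_adj [Finite V] [Nontrivial V] {u x y : V}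
    (hu : ∀ w, w ≠ u → G.Adj u w) (hxy : G.Adj x y) (hxu : x ≠ u) (hyu : y ≠ u)
    (hx : minDeg G < gDeg G x) (hy : minDeg G < gDeg G y) : ¬ MinEdgeConnected G := by
  intro hG
  have hu' : ∀ w, w ≠ u → (G.deleteEdges {s(x, y)}).Adj u w := fun w hw => by
    refine deleteEdges_adj.mpr ⟨hu w hw, fun h => ?_⟩
    rcases Sym2.eq_iff.mp h with ⟨h, -⟩ | ⟨h, -⟩
    exacts [hxu h.symm, hyu h.symm]
  have hmin : minDeg (G.deleteEdges {s(x, y)}) = minDeg G :=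
    G.minDeg_deleteEdges_singleton fun v hv => by
      rcases Sym2.mem_iff.mp hv with rfl | rfl <;> assumption
  have hconn := hG _ (G.mem_edgeSet.mpr hxy)
  rw [edgeConn_eq_minDeg hu', edgeConn_eq_minDeg hu, hmin] at hconn
  have hpos := minDeg_pos hu
  omega

end SimpleGraph

section Superpower

variable {G : Type*} [Group G]

lemma superpowerGraph_adj {x y : G} :
    (superpowerGraph G).Adj x y ↔ x ≠ y ∧ (orderOf x ∣ orderOf y ∨ orderOf y ∣ orderOf x) :=
  SimpleGraph.fromRel_adj _ _ _

lemma superpowerGraph_adj_one {x : G} (hx : x ≠ 1) : (superpowerGraph G).Adj 1 x :=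
  superpowerGraph_adj.mpr ⟨hx.symm, Or.inl (orderOf_one (G := G) ▸ one_dvd _)⟩

lemma superpowerGraph_adj_of_orderOf_eq {x y : G} (hxy : x ≠ y) (h : orderOf x = orderOf y) :
    (superpowerGraph G).Adj x y :=
  superpowerGraph_adj.mpr ⟨hxy, Or.inl h.dvd⟩

end Superpower

namespace DihedralGroup

variable {n : ℕ}

lemma sr_injective : Function.Injective (sr : ZMod n → DihedralGroup n) := fun _ _ => sr.inj

lemma r_injective : Function.Injective (r : ZMod n → DihedralGroup n) := fun _ _ => r.inj

lemma one_ne_sr (i : ZMod n) : (1 : DihedralGroup n) ≠ sr i := nofun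

variable [NeZero n]

lemma le_gDeg_superpowerGraph_sr (i : ZMod n) :
    n ≤ gDeg (superpowerGraph (DihedralGroup n)) (sr i) := by
  have hsub :
      insert 1 (range sr \ {sr i}) ⊆ (superpowerGraph (DihedralGroup n)).neighborSet (sr i) := by
    rintro w (rfl | ⟨⟨j, rfl⟩, hj⟩)
    · exact (superpowerGraph_adj_one (one_ne_sr i).symm).symm
    · exact superpowerGraph_adj_of_orderOf_eq (Ne.symm hj) (by rw [orderOf_sr, orderOf_sr])
  calc n = (insert 1 (range sr \ {sr i})).ncard := by
        rw [ncard_insert_of_notMem (by rintro ⟨⟨j, hj⟩, -⟩; exact one_ne_sr j hj.symm),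
          ncard_sdiff_singleton_of_mem (mem_range_self i), ncard_range_of_injective sr_injective,
          Nat.card_zmod, Nat.sub_add_cancel NeZero.one_le]
    _ ≤ _ := ncard_le_ncard hsub

lemma gDeg_superpowerGraph_le_of_odd {x : DihedralGroup n} (hodd : Odd (orderOf x))
    (h1 : orderOf x ≠ 1) : gDeg (superpowerGraph (DihedralGroup n)) x ≤ n - 1 := by
  have not_sr : ∀ i : ZMod n, ¬ (orderOf x ∣ orderOf (sr i) ∨ orderOf (sr i) ∣ orderOf x) := by
    rintro i (h | h) <;> rw [orderOf_sr] at h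
    · rcases (Nat.dvd_prime Nat.prime_two).mp h with h | h
      exacts [h1 h, Nat.not_even_iff_odd.mpr hodd (h ▸ even_two)]
    · exact Nat.not_even_iff_odd.mpr hodd (even_iff_two_dvd.mpr h)
  obtain ⟨k, rfl⟩ : x ∈ range r := by
    cases x with
    | r k => exact ⟨k, rfl⟩
    | sr i => exact absurd (Or.inl dvd_rfl) (not_sr i)
  have hsub : (superpowerGraph (DihedralGroup n)).neighborSet (r k) ⊆ range r \ {r k} := by
    intro w hw
    obtain ⟨hne, hdvd⟩ := superpowerGraph_adj.mp hw
    cases w with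
    | r j => exact ⟨⟨j, rfl⟩, hne.symm⟩
    | sr j => exact absurd hdvd (not_sr j)
  calc _ ≤ (range r \ {r k}).ncard := ncard_le_ncard hsub
    _ = n - 1 := by
      rw [ncard_sdiff_singleton_of_mem (mem_range_self k), ncard_range_of_injective r_injective,
        Nat.card_zmod]

end DihedralGroup

open DihedralGroup SimpleGraph in
/-- For `n ≥ 3` not a power of `2`, the order superpower graph of
the dihedral group of order `2n` is not minimally edge connected. -/
theorem stmt_12 (n : ℕ) (hn : 3 ≤ n) (hpow : ¬ ∃ k : ℕ, n = 2 ^ k) :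
    ¬ MinEdgeConnected (superpowerGraph (DihedralGroup n)) := by
  have : NeZero n := ⟨by omega⟩
  have : Fact (1 < n) := ⟨by omega⟩
  obtain ⟨p, hp, hpn, hpodd⟩ := (Nat.eq_two_pow_or_exists_odd_prime_and_dvd n).resolve_left hpow
  have : Fact p.Prime := ⟨hp⟩
  obtain ⟨x, hx⟩ := exists_prime_orderOf_dvd_card (G := DihedralGroup n) p
    (by rw [DihedralGroup.card]; exact hpn.mul_left 2)
  have hmin : minDeg (superpowerGraph (DihedralGroup n)) < n :=
    (minDeg_le_gDeg _ x).trans_lt <|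
      (gDeg_superpowerGraph_le_of_odd (hx ▸ hpodd) (hx ▸ hp.one_lt.ne')).trans_lt (by omega)
  exact not_minEdgeConnected_of_adj (u := 1) (fun _ => superpowerGraph_adj_one)
    (superpowerGraph_adj_of_orderOf_eq (sr_injective.ne zero_ne_one)
      (by rw [orderOf_sr, orderOf_sr]))
    (one_ne_sr 0).symm (one_ne_sr 1).symm
    (hmin.trans_le (le_gDeg_superpowerGraph_sr 0)) (hmin.trans_le (le_gDeg_superpowerGraph_sr 1))
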